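/- arXiv:math/0410046 — 2 statements merged into one kernel-verified Lean document; each statement's English description precedes it below -/
import Mathlib

section
/- Existence of generic standard bases. Let J be an ideal of R_C not contained in R(Q). Then the set Exp^modQ_≺(J) ⊆ ℕ^{n+q} is stable under addition, i.e. Exp^modQ_≺(J) + ℕ^{n+q} ⊆ Exp^modQ_≺(J), and consequently J admits a generic standard basis on V(Q): there exist finitely many P_1,…,P_r ∈ J \ R(Q) such that Exp^modQ_≺(J) = ∪_{j=1}^r (exp^modQ_≺(P_j) + ℕ^{n+q}). -/
/-
Existence of generic standard bases (Section 3 of the paper, commutative case).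
-/

open Classical

noncomputable section

/-- Exponents in ℕ^{n+q}, written as pairs (α, β) ∈ ℕ^n × ℕ^q. -/
abbrev Expo (n q : ℕ) := (Fin n →₀ ℕ) × (Fin q →₀ ℕ)

/-- The ring R_A = A[[x]][z], polynomials in z = (z_1,…,z_q) over A[[x]]. -/
abbrev Rxz (n q : ℕ) (A : Type) [CommRing A] :=
  MvPolynomial (Fin q) (MvPowerSeries (Fin n) A)

/-- Coefficient c_{α,β} of `P` at the pair exponent `d = (α, β)`. -/
def coeffOf {n q : ℕ} {A : Type} [CommRing A] (P : Rxz n q A) (d : Expo n q) : A :=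
  MvPowerSeries.coeff d.1 (MvPolynomial.coeff d.2 P)

/-- Newton diagram DN(P). -/
def newtonDiag {n q : ℕ} {A : Type} [CommRing A] (P : Rxz n q A) : Set (Expo n q) :=
  {d | coeffOf P d ≠ 0}

/-- The linear form L(β) = Σ l_i β_i. -/
def Lform {q : ℕ} (l : Fin q → ℕ) (β : Fin q →₀ ℕ) : ℕ := ∑ i, l i * β i

/-- Total degree |β| of a finitely supported exponent. -/
def degSum {σ : Type} [Fintype σ] (β : σ →₀ ℕ) : ℕ := ∑ i, β i

/-- The order ≺_L built from the linear form given by `l` and the tie-breaking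
monomial order `lt0` (where `lt0 d' d` means `d >₀ d'`). -/
def PrecL {n q : ℕ} (l : Fin q → ℕ) (lt0 : Expo n q → Expo n q → Prop)
    (d d' : Expo n q) : Prop :=
  Lform l d.2 < Lform l d'.2 ∨
    (Lform l d.2 = Lform l d'.2 ∧
      (degSum d.2 < degSum d'.2 ∨
        (degSum d.2 = degSum d'.2 ∧
          (degSum d'.1 < degSum d.1 ∨
            (degSum d.1 = degSum d'.1 ∧ lt0 d' d)))))

/-- `e` is the privileged exponent exp_≺(P): the `prec`-maximum of the Newton diagram of `P`. -/
def IsPrivExp {n q : ℕ} {A : Type} [CommRing A] (prec : Expo n q → Expo n q → Prop)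
    (P : Rxz n q A) (e : Expo n q) : Prop :=
  coeffOf P e ≠ 0 ∧ ∀ d, coeffOf P d ≠ 0 → d = e ∨ prec d e

/-- `v ∈ e + ℕ^{n+q}`. -/
def inShift {n q : ℕ} (e v : Expo n q) : Prop := ∃ γ : Expo n q, v = e + γ

/-- Specialization (·)_P at a prime ideal P of C: apply coefficientwise the natural
map C → C/P → F(P) = Frac(C/P). -/
def specHom {n q : ℕ} {C : Type} [CommRing C] (P : Ideal C) :
    Rxz n q C →+* Rxz n q (FractionRing (C ⧸ P)) :=
  MvPolynomial.map (MvPowerSeries.map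
    ((algebraMap (C ⧸ P) (FractionRing (C ⧸ P))).comp (Ideal.Quotient.mk P)) :
      MvPowerSeries (Fin n) C →+* MvPowerSeries (Fin n) (FractionRing (C ⧸ P)))

/-- Membership in R(Q): all the coefficients of P lie in Q. -/
def allCoeffIn {n q : ℕ} {C : Type} [CommRing C] (Q : Ideal C) (P : Rxz n q C) : Prop :=
  ∀ d, coeffOf P d ∈ Q

/-- The set Exp^modQ_≺(J) = { exp_≺((P)_Q) : P ∈ J \ R(Q) }. -/
def expModQSet {n q : ℕ} {C : Type} [CommRing C]
    (l : Fin q → ℕ) (lt0 : Expo n q → Expo n q → Prop)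
    (Q : Ideal C) (J : Ideal (Rxz n q C)) : Set (Expo n q) :=
  {d | ∃ P ∈ J, ¬ allCoeffIn Q P ∧ IsPrivExp (PrecL l lt0) (specHom Q P) d}

/-!
Multiplying `P` by the monomial `x^α z^β` translates its Newton diagram, and that of `(P)_Q`,
by `(α, β)`; since `≺` is invariant under translations, the privileged exponent moves along.
Hence `Exp^modQ_≺(J)` is a semigroup ideal of `ℕ^{n+q}`, and by Dickson's lemma it is
generated by finitely many of its elements.
-/

section Exponents
variable {n q : ℕ}

lemma Lform_add (l : Fin q → ℕ) (a b : Fin q →₀ ℕ) :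
    Lform l (a + b) = Lform l a + Lform l b := by
  simp only [Lform, Finsupp.add_apply, mul_add, Finset.sum_add_distrib]

lemma degSum_add {σ : Type} [Fintype σ] (a b : σ →₀ ℕ) :
    degSum (a + b) = degSum a + degSum b := by
  simp only [degSum, Finsupp.add_apply, Finset.sum_add_distrib]

lemma PrecL.add_right {l : Fin q → ℕ} {lt0 : Expo n q → Expo n q → Prop}
    (hlt0_add : ∀ a b c : Expo n q, lt0 a b → lt0 (a + c) (b + c))
    {d d' : Expo n q} (h : PrecL l lt0 d d') (γ : Expo n q) :
    PrecL l lt0 (d + γ) (d' + γ) := by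
  simp only [PrecL, Prod.fst_add, Prod.snd_add, Lform_add, degSum_add] at *
  rcases h with h | ⟨h1, h | ⟨h2, h | ⟨h3, h4⟩⟩⟩
  · exact Or.inl (by omega)
  · exact Or.inr ⟨by omega, Or.inl (by omega)⟩
  · exact Or.inr ⟨by omega, Or.inr ⟨by omega, Or.inl (by omega)⟩⟩
  · exact Or.inr ⟨by omega, Or.inr ⟨by omega, Or.inr ⟨by omega, hlt0_add _ _ _ h4⟩⟩⟩

theorem exists_fin_eq_iUnion_of_add_mem {M : Type*} [AddCommMonoid M] [PartialOrder M]
    [WellQuasiOrderedLE M] [CanonicallyOrderedAdd M] (E : Set M)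
    (hE : ∀ d ∈ E, ∀ γ, d + γ ∈ E) :
    ∃ (r : ℕ) (e : Fin r → M), (∀ j, e j ∈ E) ∧ E = ⋃ j, {v | ∃ γ, v = e j + γ} := by
  let I : AddSemigroupIdeal M :=
    ⟨E, fun γ d hd => by simpa only [vadd_eq_add, add_comm γ d] using hE d hd γ⟩
  obtain ⟨s, hs⟩ := AddSemigroupIdeal.fg_iff.1 (AddSemigroupIdeal.fg_of_wellQuasiOrderedLE I)
  have hmem : ∀ v, v ∈ E ↔ ∃ γ, ∃ e ∈ s, γ + e = v := fun v =>
    (SetLike.ext_iff.1 hs v).trans AddSemigroupIdeal.mem_closure''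
  refine ⟨s.card, fun j => s.equivFin.symm j, fun j => ?_, Set.ext fun v => ?_⟩
  · simpa using (hmem _).2 ⟨0, _, (s.equivFin.symm j).2, zero_add _⟩
  · simp only [hmem, Set.mem_iUnion, Set.mem_ofPred_eq]
    constructor
    · rintro ⟨γ, e, he, rfl⟩
      exact ⟨s.equivFin ⟨e, he⟩, γ, by simp [add_comm]⟩
    · rintro ⟨j, γ, rfl⟩
      exact ⟨γ, _, (s.equivFin.symm j).2, add_comm _ _⟩

end Exponents

section Monomials
variable {n q : ℕ}

def monomialXZ (A : Type) [CommRing A] (γ : Expo n q) : Rxz n q A :=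
  MvPolynomial.monomial γ.2 (MvPowerSeries.monomial γ.1 1)

variable {A : Type} [CommRing A]

lemma coeffOf_monomialXZ_mul (γ v : Expo n q) (P : Rxz n q A) :
    coeffOf (monomialXZ A γ * P) v = if γ ≤ v then coeffOf P (v - γ) else 0 := by
  simp only [coeffOf, monomialXZ, MvPolynomial.coeff_monomial_mul', Prod.le_def]
  by_cases h2 : γ.2 ≤ v.2
  · simp [h2, MvPowerSeries.coeff_monomial_mul]
  · simp [h2]

lemma IsPrivExp.monomialXZ_mul {prec : Expo n q → Expo n q → Prop}
    (hprec : ∀ {d d' : Expo n q}, prec d d' → ∀ γ, prec (d + γ) (d' + γ))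
    {S : Rxz n q A} {e : Expo n q} (h : IsPrivExp prec S e) (γ : Expo n q) :
    IsPrivExp prec (monomialXZ A γ * S) (e + γ) := by
  refine ⟨?_, fun d hd => ?_⟩
  · simpa [coeffOf_monomialXZ_mul] using h.1
  · rw [coeffOf_monomialXZ_mul] at hd
    split_ifs at hd with hγd
    · rw [← tsub_add_cancel_of_le hγd]
      rcases h.2 _ hd with heq | hlt
      · exact Or.inl (by rw [heq])
      · exact Or.inr (hprec hlt γ)
    · exact absurd rfl hd

end Monomials

section Specialization
variable {n q : ℕ} {C : Type} [CommRing C] (Q : Ideal C)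

lemma coeffOf_specHom (P : Rxz n q C) (d : Expo n q) :
    coeffOf (specHom Q P) d =
      algebraMap (C ⧸ Q) (FractionRing (C ⧸ Q)) (Ideal.Quotient.mk Q (coeffOf P d)) := by
  simp [coeffOf, specHom, MvPolynomial.coeff_map, MvPowerSeries.coeff_map]

lemma specHom_monomialXZ (γ : Expo n q) :
    specHom Q (monomialXZ C γ) = monomialXZ (FractionRing (C ⧸ Q)) γ := by
  simp [specHom, monomialXZ, MvPolynomial.map_monomial, MvPowerSeries.map_monomial]

variable {Q}

lemma not_allCoeffIn_of_isPrivExp_specHom {prec : Expo n q → Expo n q → Prop}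
    {P : Rxz n q C} {e : Expo n q} (h : IsPrivExp prec (specHom Q P) e) :
    ¬ allCoeffIn Q P := fun hP =>
  h.1 (by rw [coeffOf_specHom, Ideal.Quotient.eq_zero_iff_mem.2 (hP e), map_zero])

theorem add_mem_expModQSet {l : Fin q → ℕ} {lt0 : Expo n q → Expo n q → Prop}
    (hlt0_add : ∀ a b c : Expo n q, lt0 a b → lt0 (a + c) (b + c))
    {J : Ideal (Rxz n q C)} {d : Expo n q} (hd : d ∈ expModQSet l lt0 Q J) (γ : Expo n q) :
    d + γ ∈ expModQSet l lt0 Q J := by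
  obtain ⟨P, hPJ, -, hP⟩ := hd
  have hγP : IsPrivExp (PrecL l lt0) (specHom Q (monomialXZ C γ * P)) (d + γ) := by
    rw [map_mul, specHom_monomialXZ]
    exact hP.monomialXZ_mul (fun h => h.add_right hlt0_add) γ
  exact ⟨_, J.mul_mem_left _ hPJ, not_allCoeffIn_of_isPrivExp_specHom hγP, hγP⟩

end Specialization

theorem generic_standard_basis_exists_general
    (n q : ℕ)
    (C : Type) [CommRing C]
    (Q : Ideal C)
    (l : Fin q → ℕ)
    (lt0 : Expo n q → Expo n q → Prop)
    (hlt0_add : ∀ a b c : Expo n q, lt0 a b → lt0 (a + c) (b + c))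
    (J : Ideal (Rxz n q C)) :
    (∀ d ∈ expModQSet l lt0 Q J, ∀ γ : Expo n q, d + γ ∈ expModQSet l lt0 Q J) ∧
    ∃ (r : ℕ) (G : Fin r → Rxz n q C) (e : Fin r → Expo n q),
      (∀ j, G j ∈ J ∧ ¬ allCoeffIn Q (G j) ∧
        IsPrivExp (PrecL l lt0) (specHom Q (G j)) (e j)) ∧
      expModQSet l lt0 Q J = ⋃ j, {v | inShift (e j) v} := by
  have stable : ∀ d ∈ expModQSet l lt0 Q J, ∀ γ, d + γ ∈ expModQSet l lt0 Q J :=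
    fun d hd γ => add_mem_expModQSet hlt0_add hd γ
  obtain ⟨r, e, he, hE⟩ := exists_fin_eq_iUnion_of_add_mem _ stable
  choose G hGJ hGQ hGe using he
  exact ⟨stable, r, G, e, fun j => ⟨hGJ j, hGQ j, hGe j⟩, hE⟩

/-- Existence of generic standard bases: for an ideal J of R_C not contained in R(Q),
the set Exp^modQ_≺(J) is stable under addition of ℕ^{n+q}, and J admits a generic
standard basis on V(Q). -/
theorem generic_standard_basis_exists
    (n q : ℕ) (hn : 0 < n) (hq : 0 < q)
    (C : Type) [CommRing C] [IsDomain C] [Algebra ℚ C]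
    (Q : Ideal C) (hQ : Q.IsPrime)
    (l : Fin q → ℕ)
    (lt0 : Expo n q → Expo n q → Prop)
    (hlt0_tri : ∀ a b : Expo n q, lt0 a b ∨ a = b ∨ lt0 b a)
    (hlt0_trans : ∀ a b c : Expo n q, lt0 a b → lt0 b c → lt0 a c)
    (hlt0_wf : WellFounded lt0)
    (hlt0_add : ∀ a b c : Expo n q, lt0 a b → lt0 (a + c) (b + c))
    (J : Ideal (Rxz n q C))
    (hJ : ∃ P ∈ J, ¬ allCoeffIn Q P) :
    (∀ d ∈ expModQSet l lt0 Q J, ∀ γ : Expo n q, d + γ ∈ expModQSet l lt0 Q J) ∧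
    ∃ (r : ℕ) (G : Fin r → Rxz n q C) (e : Fin r → Expo n q),
      (∀ j, G j ∈ J ∧ ¬ allCoeffIn Q (G j) ∧
        IsPrivExp (PrecL l lt0) (specHom Q (G j)) (e j)) ∧
      expModQSet l lt0 Q J = ⋃ j, {v | inShift (e j) v} :=
  generic_standard_basis_exists_general n q C Q l lt0 hlt0_add J

end
end

section
/- Extension–contraction for the ideal of polynomials in s. Let k be a field of characteristic 0 with algebraic closure k̄, n ≥ 1, and let J be an ideal of k[[x]][s] with J ∩ k[s] ≠ (0); let b ∈ k[s] be the monic generator of J ∩ k[s]. Let J̄ be the ideal of k̄[[x]][s] generated by the image of J. Then J̄ ∩ k̄[s] = b·k̄[s]; that is, the monic generator of J̄ ∩ k̄[s] is the image of the monic generator of J ∩ k[s]. -/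
/-!
For a `k`-linear functional `l : K → k`, applying `l` to every coefficient gives an additive map
`K[[x]][s] → k[[x]][s]` which is `k[[x]][s]`-linear for the structure given by `extScalars`;
hence it sends the extended ideal `J̄` into `J`, and `K[s]` into `k[s]`. If `p ∈ J̄ ∩ K[s]`, its
remainder `r` modulo `b` lies in `J̄ ∩ K[s]` and has degree `< deg b`, so each `l(r)` lies in
`J ∩ k[s] = (b)` with degree `< deg b`, i.e. `l(r) = 0`. Since the functionals separate points of
`K`, `r = 0` and `b ∣ p`.
-/

open Classical Polynomial

noncomputable section

/-- The ring A[[x]][s], polynomials in one variable s over A[[x]]. -/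
abbrev RS (n : ℕ) (A : Type) [CommRing A] := Polynomial (MvPowerSeries (Fin n) A)

/-- The inclusion A[s] → A[[x]][s], applied coefficientwise. -/
def toRS (n : ℕ) (A : Type) [CommRing A] : Polynomial A →+* RS n A :=
  Polynomial.mapRingHom (MvPowerSeries.C : A →+* MvPowerSeries (Fin n) A)

/-- Coefficientwise extension of scalars A[[x]][s] → B[[x]][s] along a ring map A → B. -/
def extScalars (n : ℕ) {A B : Type} [CommRing A] [CommRing B] (f : A →+* B) :
    RS n A →+* RS n B :=
  Polynomial.mapRingHom (MvPowerSeries.map f : MvPowerSeries (Fin n) A →+* MvPowerSeries (Fin n) B)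

namespace Polynomial

variable {R S : Type*}

def mapCoeffs [Semiring R] [Semiring S] (f : R →+ S) : R[X] →+ S[X] where
  toFun p := ⟨AddMonoidAlgebra.map f p.toFinsupp⟩
  map_zero' := by simp
  map_add' p q := by simp [AddMonoidAlgebra.map_add]

@[simp]
theorem coeff_mapCoeffs [Semiring R] [Semiring S] (f : R →+ S) (p : R[X]) (i : ℕ) :
    (mapCoeffs f p).coeff i = f (p.coeff i) := by
  simp [mapCoeffs, coeff]

theorem degree_mapCoeffs_le [Semiring R] [Semiring S] (f : R →+ S) (p : R[X]) :
    (mapCoeffs f p).degree ≤ p.degree := by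
  refine degree_le_iff_coeff_zero _ _ |>.mpr fun i hi => ?_
  rw [coeff_mapCoeffs, coeff_eq_zero_of_degree_lt hi, map_zero]

theorem mapCoeffs_mul_map [Semiring R] [Semiring S] (ι : R →+* S) (F : S →+ R)
    (hF : ∀ s r, F (s * ι r) = F s * r) (p : S[X]) (q : R[X]) :
    mapCoeffs F (p * q.map ι) = mapCoeffs F p * q := by
  ext i
  simp only [coeff_mapCoeffs, coeff_mul, coeff_map, map_sum, hF]

theorem mapCoeffs_map [Semiring R] [Semiring S] {R' S' : Type*} [Semiring R'] [Semiring S']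
    (i : R →+* S) (i' : R' →+* S') (f : R →+ R') (F : S →+ S') (hF : ∀ r, F (i r) = i' (f r))
    (p : R[X]) : mapCoeffs F (p.map i) = (mapCoeffs f p).map i' := by
  ext j
  simp [coeff_map, hF]

theorem eq_zero_of_forall_mapCoeffs_dual_eq_zero {k K : Type*} [Field k] [Ring K] [Algebra k K]
    {p : K[X]} (h : ∀ l : Module.Dual k K, mapCoeffs l.toAddMonoidHom p = 0) : p = 0 := by
  ext i
  rw [coeff_zero, ← Module.forall_dual_apply_eq_zero_iff k]
  intro l
  simpa using congr_arg (coeff · i) (h l)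

end Polynomial

namespace MvPowerSeries

variable {σ R S : Type*}

def mapCoeffs [Semiring R] [Semiring S] (f : R →+ S) : MvPowerSeries σ R →+ MvPowerSeries σ S :=
  f.compLeft _

@[simp]
theorem coeff_mapCoeffs [Semiring R] [Semiring S] (f : R →+ S) (φ : MvPowerSeries σ R)
    (d : σ →₀ ℕ) : coeff d (mapCoeffs f φ) = f (coeff d φ) := rfl

theorem mapCoeffs_mul_map [Semiring R] [Semiring S] (ι : R →+* S) (F : S →+ R)
    (hF : ∀ s r, F (s * ι r) = F s * r) (φ : MvPowerSeries σ S) (ψ : MvPowerSeries σ R) :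
    mapCoeffs F (φ * map ι ψ) = mapCoeffs F φ * ψ := by
  ext d
  simp only [coeff_mapCoeffs, coeff_mul, coeff_map, map_sum, hF]

theorem mapCoeffs_C [Semiring R] [Semiring S] (f : R →+ S) (r : R) :
    mapCoeffs (σ := σ) f (C r) = C (f r) := by
  ext d
  simp only [coeff_mapCoeffs, coeff_C]
  split_ifs <;> simp

end MvPowerSeries

theorem Ideal.apply_mem_of_mem_map {R S : Type*} [CommSemiring R] [Semiring S] (ι : R →+* S)
    (F : S →+ R) (hF : ∀ s r, F (s * ι r) = F s * r) {J : Ideal R} {y : S}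
    (hy : y ∈ J.map ι) : F y ∈ J := by
  suffices ∀ c, F (c * y) ∈ J by simpa using this 1
  refine Submodule.span_induction (p := fun y _ => ∀ c, F (c * y) ∈ J) ?_ ?_ ?_ ?_ hy
  · rintro _ ⟨r, hr, rfl⟩ c
    rw [hF]
    exact J.mul_mem_left _ hr
  · simp
  · intro y z _ _ hy hz c
    rw [mul_add, map_add]
    exact J.add_mem (hy c) (hz c)
  · intro a y _ hy c
    rw [smul_eq_mul, ← mul_assoc]
    exact hy (c * a)

section ExtensionContraction

variable {n : ℕ} {k K : Type} [Field k] [CommRing K] [Algebra k K]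

def dualRS (l : Module.Dual k K) : RS n K →+ RS n k :=
  Polynomial.mapCoeffs (MvPowerSeries.mapCoeffs l.toAddMonoidHom)

theorem dualRS_mul_extScalars (l : Module.Dual k K) (c : RS n K) (f : RS n k) :
    dualRS l (c * extScalars n (algebraMap k K) f) = dualRS l c * f :=
  Polynomial.mapCoeffs_mul_map _ _
    (MvPowerSeries.mapCoeffs_mul_map _ _ fun a r => by
      change l (a * _) = l a * r
      rw [← Algebra.commutes, ← Algebra.smul_def, map_smul, smul_eq_mul, mul_comm]) c f

theorem dualRS_toRS (l : Module.Dual k K) (p : K[X]) :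
    dualRS (n := n) l (toRS n K p) = toRS n k (p.mapCoeffs l.toAddMonoidHom) :=
  Polynomial.mapCoeffs_map _ _ _ _ (MvPowerSeries.mapCoeffs_C _) p

theorem extScalars_toRS (p : k[X]) :
    extScalars n (algebraMap k K) (toRS n k p) = toRS n K (p.map (algebraMap k K)) := by
  simp only [extScalars, toRS, Polynomial.coe_mapRingHom, Polynomial.map_map]
  congr 1
  exact RingHom.ext fun a => MvPowerSeries.map_C _ a

theorem mapCoeffs_dual_mem_comap_toRS (J : Ideal (RS n k)) (l : Module.Dual k K) {p : K[X]}
    (hp : p ∈ (J.map (extScalars n (algebraMap k K))).comap (toRS n K)) :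
    p.mapCoeffs l.toAddMonoidHom ∈ J.comap (toRS n k) := by
  rw [Ideal.mem_comap, ← dualRS_toRS]
  exact Ideal.apply_mem_of_mem_map _ _ (dualRS_mul_extScalars l) hp

theorem comap_toRS_map_extScalars [Nontrivial K] (J : Ideal (RS n k)) {b : k[X]}
    (hb_monic : b.Monic)
    (hb : J.comap (toRS n k) = Ideal.span {b}) :
    (J.map (extScalars n (algebraMap k K))).comap (toRS n K)
      = Ideal.span {b.map (algebraMap k K)} := by
  set b' := b.map (algebraMap k K)
  have hb'_mem : b' ∈ (J.map (extScalars n (algebraMap k K))).comap (toRS n K) := by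
    rw [Ideal.mem_comap, ← extScalars_toRS]
    exact Ideal.mem_map_of_mem _ (hb.ge (Ideal.mem_span_singleton_self b))
  refine le_antisymm (fun p hp => ?_) (Ideal.span_le.mpr (by simpa using hb'_mem))
  rw [Ideal.mem_span_singleton, ← Polynomial.modByMonic_eq_zero_iff_dvd (hb_monic.map _)]
  have hr_mem := Ideal.sub_mem _ hp (Ideal.mul_mem_right (p /ₘ b') _ hb'_mem)
  rw [← Polynomial.modByMonic_eq_sub_mul_div] at hr_mem
  refine Polynomial.eq_zero_of_forall_mapCoeffs_dual_eq_zero (k := k) fun l => ?_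
  have hdvd : b ∣ (p %ₘ b').mapCoeffs l.toAddMonoidHom := by
    rw [← Ideal.mem_span_singleton, ← hb]
    exact mapCoeffs_dual_mem_comap_toRS J l hr_mem
  refine Polynomial.eq_zero_of_dvd_of_degree_lt hdvd ?_
  calc _ ≤ (p %ₘ b').degree := Polynomial.degree_mapCoeffs_le _ _
    _ < b'.degree := Polynomial.degree_modByMonic_lt _ (hb_monic.map _)
    _ ≤ b.degree := Polynomial.degree_map_le

end ExtensionContraction

theorem extension_contraction_general
    (n : ℕ) (k : Type) [Field k]
    (J : Ideal (RS n k))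
    (b : Polynomial k) (hbMonic : b.Monic)
    (hb : Ideal.comap (toRS n k) J = Ideal.span {b}) :
    Ideal.comap (toRS n (AlgebraicClosure k))
        (Ideal.map (extScalars n (algebraMap k (AlgebraicClosure k))) J)
      = Ideal.span {Polynomial.map (algebraMap k (AlgebraicClosure k)) b} :=
  comap_toRS_map_extScalars J hbMonic hb

/-- Extension–contraction for the ideal of polynomials in s: if b is the monic
generator of J ∩ k[s] ≠ (0) and J̄ is the ideal of k̄[[x]][s] generated by J, then
J̄ ∩ k̄[s] is generated by the image of b in k̄[s]. -/
theorem extension_contraction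
    (n : ℕ) (hn : 0 < n) (k : Type) [Field k] [CharZero k]
    (J : Ideal (RS n k))
    (hJne : Ideal.comap (toRS n k) J ≠ ⊥)
    (b : Polynomial k) (hbMonic : b.Monic)
    (hb : Ideal.comap (toRS n k) J = Ideal.span {b}) :
    Ideal.comap (toRS n (AlgebraicClosure k))
        (Ideal.map (extScalars n (algebraMap k (AlgebraicClosure k))) J)
      = Ideal.span {Polynomial.map (algebraMap k (AlgebraicClosure k)) b} :=
  extension_contraction_general n k J b hbMonic hb
end
end
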